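/- In any folding of a polyiamond onto a regular tetrahedron (mapping each triangle isometrically onto a face), if all triangles of the polyiamond share a common lattice vertex v, then all faces covered by the folding contain the image of v, and hence the face of the tetrahedron opposite to the image vertex of v is never covered. -/

import Mathlib

/-- A triangle cell of the triangular lattice: position `(x, y)` together with
a Boolean marking an upward (`true`) or downward (`false`) triangle. -/
abbrev Tri : Type := ℤ × ℤ × Bool

/-- The three lattice vertices of a triangle cell. -/
def triVerts : Tri → Finset (ℤ × ℤ)
  | (x, y, true) => {(x, y), (x + 1, y), (x, y + 1)}
  | (x, y, false) => {(x + 1, y), (x, y + 1), (x + 1, y + 1)}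

/-- Two triangle cells are adjacent when they share an edge, i.e. exactly two
vertices. -/
def triAdj (t u : Tri) : Prop := t ≠ u ∧ (triVerts t ∩ triVerts u).card = 2

/-- The dual graph of a polyiamond: a vertex per triangle cell, an edge per
edge-adjacent pair of cells. -/
def dualGraph (P : Finset Tri) : SimpleGraph P where
  Adj a b := triAdj a.1 b.1
  symm := by
    constructor
    rintro a b ⟨h1, h2⟩
    exact ⟨fun h => h1 (by rw [h]), by rwa [Finset.inter_comm]⟩
  loopless := by constructor; rintro a ⟨h1, _⟩; exact h1 rfl

theorem Finset.image_ne_compl_singleton_of_mem {α β : Type*} [DecidableEq β] [Fintype β]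
    {s : Finset α} {a : α} (f : α → β) (ha : a ∈ s) : s.image f ≠ {f a}ᶜ := by
  intro h
  simpa [h] using mem_image_of_mem f ha

theorem common_vertex_folding_misses_opposite_face_general (P : Finset Tri)
    (g : ℤ × ℤ → Fin 4)
    (v : ℤ × ℤ) (hv : ∀ t ∈ P, v ∈ triVerts t) :
    (∀ t ∈ P, g v ∈ (triVerts t).image g) ∧
    (∀ t ∈ P, (triVerts t).image g ≠ ({g v}ᶜ : Finset (Fin 4))) :=
  ⟨fun t ht => Finset.mem_image_of_mem g (hv t ht),
    fun t ht => Finset.image_ne_compl_singleton_of_mem g (hv t ht)⟩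

/-- Model the regular tetrahedron by its 4 vertices `Fin 4`; each
face is the 3-element set of its vertices, and the face opposite a vertex `w`
is `{w}ᶜ`.  A folding of a polyiamond `P` onto the tetrahedron is modeled by a
map `g` sending each lattice vertex to a tetrahedron vertex that is injective
on every triangle of `P` (so triangle `t` covers the face `g '' triVerts t`);
consistency across shared edges is automatic since `g` is a single map.  If all
triangles of `P` share a common lattice vertex `v`, then every face covered by
the folding contains the image vertex `g v`, and hence the face opposite
`g v` is never covered. -/
theorem common_vertex_folding_misses_opposite_face (P : Finset Tri)
    (hne : P.Nonempty) (hconn : (dualGraph P).Connected)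
    (g : ℤ × ℤ → Fin 4) (hfold : ∀ t ∈ P, ((triVerts t).image g).card = 3)
    (v : ℤ × ℤ) (hv : ∀ t ∈ P, v ∈ triVerts t) :
    (∀ t ∈ P, g v ∈ (triVerts t).image g) ∧
    (∀ t ∈ P, (triVerts t).image g ≠ ({g v}ᶜ : Finset (Fin 4))) :=
  common_vertex_folding_misses_opposite_face_general P g v hv
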